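/- Let the graded polynomial ring R = C[x,y,z,w] have variables of weights 2,3,3,4. Then the sixth Veronese subalgebra R^{(6)} is generated as a C-algebra by x^3, xw, w^3, y^2, yz, z^2, of weights 1,1,2,1,1,1 in R^{(6)}, and the kernel of the corresponding surjection C[a,b,u,c,d,e] → R^{(6)} (weights 1,1,2,1,1,1) is generated by the two elements a·u - b^3 and c·e - d^2, of degrees 3 and 2 respectively. -/

import Mathlib

open MvPolynomial

/-- Weights of the variables of `R = ℂ[x,y,z,w]` for `ℙ(2,3,3,4)`. -/
def w2334 : Fin 4 → ℕ := ![2, 3, 3, 4]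

/-- The map `ℂ[a,b,u,c,d,e] → ℂ[x,y,z,w]` sending `a,b,u,c,d,e` to
`x³, xw, w³, y², yz, z²`. -/
noncomputable def ver2334 : MvPolynomial (Fin 6) ℂ →ₐ[ℂ] MvPolynomial (Fin 4) ℂ :=
  aeval ![X 0 ^ 3, X 0 * X 3, X 3 ^ 3, X 1 ^ 2, X 1 * X 2, X 2 ^ 2]

/-!
The map `ver2334` sends each monomial `x^m` to a monomial `x^(E m)`. For such a monomial map
the image is spanned by the monomials `x^f` with `f` in the range of `E`, and the kernel by the
binomials `x^m - x^m'` with `E m = E m'`. Here the range of `E` consists of the exponents of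
weight divisible by `6`, and `E m = E m'` already forces `x^m ≡ x^m'` modulo `au - b³` and
`ce - d²`: if `i - i' = k - k' = t ≥ 0`, then
`a^i b^j u^k = a^i' (au)^t b^j u^k' ≡ a^i' b^(j+3t) u^k'`, and likewise for `c, d, e`.
-/

theorem pow_mul_pow_mul_pow_eq_of_mul_eq_pow {M : Type*} [CommMonoid M] {a b c : M} {r : ℕ}
    (hr : 0 < r) (h : a * c = b ^ r) {i j k i' j' k' : ℕ}
    (h₁ : r * i + j = r * i' + j') (h₂ : j + r * k = j' + r * k') :
    a ^ i * b ^ j * c ^ k = a ^ i' * b ^ j' * c ^ k' := by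
  have shift (i j k t : ℕ) :
      a ^ (i + t) * b ^ j * c ^ (k + t) = a ^ i * b ^ (j + r * t) * c ^ k := by
    rw [pow_add, pow_add, pow_add, pow_mul, ← h, mul_pow]
    ac_rfl
  wlog hi : i' ≤ i generalizing i j k i' j' k'
  · exact (this h₁.symm h₂.symm (by omega)).symm
  obtain ⟨t, rfl⟩ := Nat.exists_eq_add_of_le hi
  have hj : j' = j + r * t := by linarith
  have hk : k = k' + t := by
    subst hj
    exact Nat.eq_of_mul_eq_mul_left hr (by linarith)
  rw [hk, shift, hj]

namespace MvPolynomial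

theorem iSup_weightedHomogeneousSubmodule {σ R M ι : Type*} [CommSemiring R] [AddCommMonoid M]
    (w : σ → M) (f : ι → M) :
    ⨆ i, weightedHomogeneousSubmodule R w (f i) =
      restrictSupport R (⋃ i, {d | Finsupp.weight w d = f i}) := by
  have h (i : ι) : weightedHomogeneousSubmodule R w (f i) =
      restrictSupport R {d | Finsupp.weight w d = f i} :=
    weightedHomogeneousSubmodule_eq_finsupp_supported R w (f i)
  simp_rw [h, restrictSupport_eq_span, Set.image_iUnion, Submodule.span_iUnion]

section MonomialMap

variable {σ τ R : Type*} [CommRing R]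

theorem map_monomial_of_map_monomial_one (f : MvPolynomial σ R →ₗ[R] MvPolynomial τ R)
    {m : σ →₀ ℕ} {m' : τ →₀ ℕ} (h : f (monomial m 1) = monomial m' 1) (c : R) :
    f (monomial m c) = monomial m' c := by
  rw [← mul_one c, ← smul_eq_mul, ← smul_monomial, map_smul, h, smul_monomial]

variable {φ : MvPolynomial σ R →ₐ[R] MvPolynomial τ R} {E : (σ →₀ ℕ) → (τ →₀ ℕ)}
  (hφ : ∀ m, φ (monomial m 1) = monomial (E m) 1)
include hφ

theorem toSubmodule_range_eq_restrictSupport :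
    Subalgebra.toSubmodule φ.range = restrictSupport R (Set.range E) := by
  have hconstr : (basisMonomials σ R).constr R (fun m ↦ monomial (E m) 1) = φ.toLinearMap :=
    (basisMonomials σ R).constr_eq R fun m ↦ by simp [hφ]
  calc Subalgebra.toSubmodule φ.range = LinearMap.range φ.toLinearMap := by ext; simp
    _ = Submodule.span R (Set.range fun m ↦ monomial (E m) 1) := by
      rw [← hconstr, Module.Basis.constr_range]
    _ = restrictSupport R (Set.range E) := by
      rw [restrictSupport_eq_span, ← Set.range_comp]
      rfl

theorem ker_le_span_monomial_sub_monomial :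
    RingHom.ker φ ≤
      Ideal.span {p | ∃ m m', E m = E m' ∧ monomial m 1 - monomial m' 1 = p} := by
  -- `L` sends `x^f` to a chosen monomial of the fibre `E⁻¹(f)`, so `p - L (φ p)` is a
  -- combination of binomials, and it equals `p` on the kernel.
  set L : MvPolynomial τ R →ₗ[R] MvPolynomial σ R :=
    (basisMonomials τ R).constr R (fun f ↦ monomial (Function.invFun E f) 1)
  have hL (f : τ →₀ ℕ) (c : R) : L (monomial f c) = monomial (Function.invFun E f) c :=
    map_monomial_of_map_monomial_one L ((basisMonomials τ R).constr_basis R _ f) c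
  have key (p : MvPolynomial σ R) : p - L (φ p) ∈
      Ideal.span {p | ∃ m m', E m = E m' ∧ monomial m 1 - monomial m' 1 = p} := by
    induction p using induction_on' with
    | monomial m c =>
      rw [← AlgHom.toLinearMap_apply, map_monomial_of_map_monomial_one _ (hφ m), hL,
        ← mul_one c, ← C_mul_monomial, ← C_mul_monomial, ← mul_sub]
      exact Ideal.mul_mem_left _ _ <| Ideal.subset_span
        ⟨m, _, (Function.invFun_eq ⟨m, rfl⟩).symm, rfl⟩
    | add p q hp hq =>
      rw [map_add, map_add, add_sub_add_comm]
      exact add_mem hp hq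
  intro p hp
  simpa [RingHom.mem_ker.mp hp] using key p

end MonomialMap

end MvPolynomial

noncomputable def ver2334Exponent (m : Fin 6 →₀ ℕ) : Fin 4 →₀ ℕ :=
  Finsupp.equivFunOnFinite.symm ![3 * m 0 + m 1, 2 * m 3 + m 4, m 4 + 2 * m 5, m 1 + 3 * m 2]

theorem ver2334_monomial (m : Fin 6 →₀ ℕ) :
    ver2334 (monomial m 1) = monomial (ver2334Exponent m) 1 := by
  rw [ver2334, aeval_monomial, monomial_eq]
  simp only [map_one, one_mul, Finsupp.prod_fintype _ _ fun _ ↦ pow_zero _, Fin.prod_univ_six,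
    Fin.prod_univ_four, ver2334Exponent, Finsupp.equivFunOnFinite_symm_apply_apply,
    Matrix.cons_val_zero, Matrix.cons_val_one, Matrix.cons_val]
  ring

theorem weight_w2334 (d : Fin 4 →₀ ℕ) :
    Finsupp.weight w2334 d = 2 * d 0 + 3 * d 1 + 3 * d 2 + 4 * d 3 := by
  simp [Finsupp.weight_apply, Finsupp.sum_fintype, Fin.sum_univ_four, w2334, mul_comm]

theorem range_ver2334Exponent :
    Set.range ver2334Exponent = ⋃ n, {d | Finsupp.weight w2334 d = 6 * n} := by
  ext d
  simp only [Set.mem_range, Set.mem_iUnion, Set.mem_ofPred_eq, weight_w2334]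
  constructor
  · rintro ⟨m, rfl⟩
    refine ⟨m 0 + m 1 + 2 * m 2 + m 3 + m 4 + m 5, ?_⟩
    simp only [ver2334Exponent, Finsupp.equivFunOnFinite_symm_apply_apply, Matrix.cons_val_zero,
      Matrix.cons_val_one, Matrix.cons_val]
    ring
  · rintro ⟨n, hn⟩
    -- `6 ∣ 2 d₀ + 3 d₁ + 3 d₂ + 4 d₃` forces `d₀ ≡ d₃ (mod 3)` and `d₁ ≡ d₂ (mod 2)`.
    refine ⟨Finsupp.equivFunOnFinite.symm ![d 0 / 3, d 0 % 3, (d 3 - d 0 % 3) / 3,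
      d 1 / 2, d 1 % 2, (d 2 - d 1 % 2) / 2], ?_⟩
    ext i
    fin_cases i <;> simp [ver2334Exponent] <;> omega

theorem monomial_sub_monomial_mem_span_of_ver2334Exponent_eq {m m' : Fin 6 →₀ ℕ}
    (h : ver2334Exponent m = ver2334Exponent m') :
    (monomial m 1 - monomial m' 1 : MvPolynomial (Fin 6) ℂ) ∈
      Ideal.span {X 0 * X 2 - X 1 ^ 3, X 3 * X 5 - X 4 ^ 2} := by
  set I : Ideal (MvPolynomial (Fin 6) ℂ) := Ideal.span {X 0 * X 2 - X 1 ^ 3, X 3 * X 5 - X 4 ^ 2}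
  set v := fun i ↦ Ideal.Quotient.mk I (X i)
  have hmk (n : Fin 6 →₀ ℕ) : Ideal.Quotient.mk I (monomial n 1) =
      (v 0 ^ n 0 * v 1 ^ n 1 * v 2 ^ n 2) * (v 3 ^ n 3 * v 4 ^ n 4 * v 5 ^ n 5) := by
    simp only [monomial_eq, C_1, one_mul, Finsupp.prod_fintype _ _ fun _ ↦ pow_zero _,
      Fin.prod_univ_six, map_mul, map_pow, v]
    ring
  have hcubic : v 0 * v 2 = v 1 ^ 3 := by
    rw [← map_mul, ← map_pow, Ideal.Quotient.eq]
    exact Ideal.subset_span (by simp)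
  have hconic : v 3 * v 5 = v 4 ^ 2 := by
    rw [← map_mul, ← map_pow, Ideal.Quotient.eq]
    exact Ideal.subset_span (by simp)
  simp only [ver2334Exponent, EmbeddingLike.apply_eq_iff_eq, Matrix.vecCons_inj, and_true] at h
  obtain ⟨hx, hy, hz, hw⟩ := h
  rw [← Ideal.Quotient.eq, hmk, hmk,
    pow_mul_pow_mul_pow_eq_of_mul_eq_pow three_pos hcubic hx hw,
    pow_mul_pow_mul_pow_eq_of_mul_eq_pow two_pos hconic hy hz]

/-- `ℙ(2,3,3,4)`: the sixth Veronese subalgebra `R⁽⁶⁾` of `R = ℂ[x,y,z,w]`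
(weights `2,3,3,4`) is generated by `x³, xw, w³, y², yz, z²`, which are
weighted homogeneous of degrees `6·1, 6·1, 6·2, 6·1, 6·1, 6·1` (i.e. of
weights `1,1,2,1,1,1` in `R⁽⁶⁾`), and the kernel of the corresponding
presentation `ℂ[a,b,u,c,d,e] → R⁽⁶⁾` is generated by the two elements
`a·u - b³` and `c·e - d²`, of degrees `3` and `2` respectively. -/
theorem veronese_2334 :
    IsWeightedHomogeneous w2334 ((X 0 : MvPolynomial (Fin 4) ℂ) ^ 3) (6 * 1) ∧
    IsWeightedHomogeneous w2334 ((X 0 : MvPolynomial (Fin 4) ℂ) * X 3) (6 * 1) ∧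
    IsWeightedHomogeneous w2334 ((X 3 : MvPolynomial (Fin 4) ℂ) ^ 3) (6 * 2) ∧
    IsWeightedHomogeneous w2334 ((X 1 : MvPolynomial (Fin 4) ℂ) ^ 2) (6 * 1) ∧
    IsWeightedHomogeneous w2334 ((X 1 : MvPolynomial (Fin 4) ℂ) * X 2) (6 * 1) ∧
    IsWeightedHomogeneous w2334 ((X 2 : MvPolynomial (Fin 4) ℂ) ^ 2) (6 * 1) ∧
    (Subalgebra.toSubmodule ver2334.range =
      ⨆ n : ℕ, weightedHomogeneousSubmodule ℂ w2334 (6 * n)) ∧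
    RingHom.ker (ver2334 : MvPolynomial (Fin 6) ℂ →+* MvPolynomial (Fin 4) ℂ) =
      Ideal.span {X 0 * X 2 - X 1 ^ 3, X 3 * X 5 - X 4 ^ 2} := by
  have hX (i : Fin 4) := isWeightedHomogeneous_X ℂ w2334 i
  refine ⟨by simpa [w2334] using (hX 0).pow 3, by simpa [w2334] using (hX 0).mul (hX 3),
    by simpa [w2334] using (hX 3).pow 3, by simpa [w2334] using (hX 1).pow 2,
    by simpa [w2334] using (hX 1).mul (hX 2), by simpa [w2334] using (hX 2).pow 2, ?_,
    le_antisymm ?_ (Ideal.span_le.mpr ?_)⟩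
  · rw [toSubmodule_range_eq_restrictSupport ver2334_monomial, range_ver2334Exponent,
      iSup_weightedHomogeneousSubmodule]
  · refine (ker_le_span_monomial_sub_monomial ver2334_monomial).trans (Ideal.span_le.mpr ?_)
    rintro _ ⟨m, m', h, rfl⟩
    exact monomial_sub_monomial_mem_span_of_ver2334Exponent_eq h
  · rintro _ (rfl | rfl) <;> simp [ver2334] <;> ring
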